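/- If (M₁,∇₁) is affine Szabó at p₁ and (M₂,∇₂) is affine Szabó at p₂, then the product manifold M₁ × M₂ with the product connection ∇₁ ⊕ ∇₂ is affine Szabó at (p₁,p₂). -/

import Mathlib

open scoped BigOperators

noncomputable section AffineSzabo

variable {ι : Type} [Fintype ι] [DecidableEq ι]

/-- Points of the coordinate chart. -/
abbrev Pt (ι : Type) := ι → ℝ
/-- Vector fields in coordinates. -/
abbrev VF (ι : Type) := Pt ι → Pt ι
/-- Christoffel symbols `Γ p i j k = Γ^i_{jk}(p)` of a torsion-free affine connection. -/
abbrev Chr (ι : Type) := Pt ι → ι → ι → ι → ℝ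

/-- Partial derivative in the `j`-th coordinate direction. -/
def pd (j : ι) (f : Pt ι → ℝ) (p : Pt ι) : ℝ :=
  fderiv ℝ f p (Pi.single j 1)

/-- The covariant derivative `∇_X Y` of the affine connection with Christoffel symbols `Γ`. -/
def conn (Γ : Chr ι) (X Y : VF ι) : VF ι :=
  fun p i => fderiv ℝ (fun q => Y q i) p (X p) + ∑ j, ∑ k, Γ p i j k * X p j * Y p k

/-- The Lie bracket of vector fields. -/
def bracket (X Y : VF ι) : VF ι :=
  fun p i => fderiv ℝ (fun q => Y q i) p (X p) - fderiv ℝ (fun q => X q i) p (Y p)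

/-- The curvature tensor `R(X,Y)Z = ∇_X∇_Y Z − ∇_Y∇_X Z − ∇_{[X,Y]}Z`. -/
def curv (Γ : Chr ι) (X Y Z : VF ι) : VF ι :=
  conn Γ X (conn Γ Y Z) - conn Γ Y (conn Γ X Z) - conn Γ (bracket X Y) Z

/-- The covariant derivative of the curvature tensor,
`(∇_X R)(Y,Z)W = ∇_X(R(Y,Z)W) − R(∇_X Y,Z)W − R(Y,∇_X Z)W − R(Y,Z)∇_X W`. -/
def covCurv (Γ : Chr ι) (X Y Z W : VF ι) : VF ι :=
  conn Γ X (curv Γ Y Z W) - curv Γ (conn Γ X Y) Z W - curv Γ Y (conn Γ X Z) W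
    - curv Γ Y Z (conn Γ X W)

/-- The affine Szabó operator `S(X)Y = (∇_X R)(Y,X)X`. -/
def szabo (Γ : Chr ι) (X Y : VF ι) : VF ι := covCurv Γ X Y X X

/-- The constant vector field extending a tangent vector `v`. -/
def cvf (v : Pt ι) : VF ι := fun _ => v

/-- The matrix of the affine Szabó operator `S(X)` at the point `p` with respect to the
tangent vector `X = v`, in the coordinate basis. -/
def szaboMat (Γ : Chr ι) (p v : Pt ι) : Matrix ι ι ℝ :=
  Matrix.of fun i m => szabo Γ (cvf v) (cvf (Pi.single m 1)) p i

/-- The Ricci tensor `Ric(X,Y) = trace (Z ↦ R(Z,X)Y)`. -/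
def ricci (Γ : Chr ι) (X Y : VF ι) (p : Pt ι) : ℝ :=
  ∑ i, curv Γ (cvf (Pi.single i 1)) X Y p i

/-- The covariant derivative of the Ricci tensor,
`(∇_X Ric)(Z,W) = X(Ric(Z,W)) − Ric(∇_X Z,W) − Ric(Z,∇_X W)`. -/
def covRic (Γ : Chr ι) (X Z W : VF ι) (p : Pt ι) : ℝ :=
  fderiv ℝ (ricci Γ Z W) p (X p) - ricci Γ (conn Γ X Z) W p - ricci Γ Z (conn Γ X W) p

/-- A vector field is smooth if its components are smooth. -/
def SmoothVF (X : VF ι) : Prop := ∀ i, ContDiff ℝ (⊤ : ℕ∞) fun p => X p i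

/-- A connection is smooth if its Christoffel symbols are smooth. -/
def SmoothChr (Γ : Chr ι) : Prop := ∀ i j k, ContDiff ℝ (⊤ : ℕ∞) fun p => Γ p i j k

/-- The Ricci tensor of `Γ` is cyclic parallel: `(∇_X Ric)(X,X) = 0` for all vector fields `X`. -/
def CyclicParallelRic (Γ : Chr ι) : Prop :=
  ∀ X : VF ι, SmoothVF X → ∀ p, covRic Γ X X X p = 0

/-- The connection is affine Szabó: every affine Szabó operator is nilpotent. -/
def AffineSzabo (Γ : Chr ι) : Prop :=
  ∀ p v : Pt ι, IsNilpotent (szaboMat Γ p v)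


/-- The product connection of two affine connections. -/
def prodChr {ι₁ ι₂ : Type} (Γ₁ : Chr ι₁) (Γ₂ : Chr ι₂) : Chr (ι₁ ⊕ ι₂) := fun p i j k =>
  match i, j, k with
  | .inl a, .inl b, .inl c => Γ₁ (fun x => p (.inl x)) a b c
  | .inr a, .inr b, .inr c => Γ₂ (fun x => p (.inr x)) a b c
  | _, _, _ => 0

/-! ### Auxiliary lemmas for the product theorem -/

section ZeroLemmas

lemma conn_cvf_zero_left (Γ : Chr ι) (Z : VF ι) : conn Γ (cvf 0) Z = cvf 0 := by
  funext p i; simp [conn, cvf]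

lemma conn_cvf_zero_right (Γ : Chr ι) (X : VF ι) : conn Γ X (cvf 0) = cvf 0 := by
  funext p i; simp [conn, cvf]

lemma bracket_cvf_zero_left (Z : VF ι) : bracket (cvf 0) Z = cvf 0 := by
  funext p i; simp [bracket, cvf]

lemma curv_cvf_zero (Γ : Chr ι) (Z W : VF ι) : curv Γ (cvf 0) Z W = cvf 0 := by
  unfold curv
  simp only [conn_cvf_zero_left, bracket_cvf_zero_left, conn_cvf_zero_right]
  funext p i; simp [cvf]

lemma szabo_cvf_zero (Γ : Chr ι) (X : VF ι) : szabo Γ X (cvf 0) = cvf 0 := by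
  unfold szabo covCurv
  simp only [curv_cvf_zero, conn_cvf_zero_right]
  funext p i; simp [cvf]

end ZeroLemmas

section SmoothLemmas

lemma smoothVF_cvf (v : Pt ι) : SmoothVF (cvf v) := fun _ => contDiff_const

lemma smoothVF_sub {X Y : VF ι} (hX : SmoothVF X) (hY : SmoothVF Y) : SmoothVF (X - Y) :=
  fun i => (hX i).sub (hY i)

lemma smooth_fderiv_apply {f : Pt ι → ℝ} (hf : ContDiff ℝ (⊤ : ℕ∞) f) {X : VF ι} (hX : SmoothVF X) :
    ContDiff ℝ (⊤ : ℕ∞) fun p => fderiv ℝ f p (X p) :=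
  (hf.fderiv_right (by simp)).clm_apply (contDiff_pi.mpr hX)

lemma smooth_conn {Γ : Chr ι} (hΓ : SmoothChr Γ) {X Y : VF ι} (hX : SmoothVF X)
    (hY : SmoothVF Y) : SmoothVF (conn Γ X Y) := by
  intro i
  simp only [conn]
  refine ((smooth_fderiv_apply (hY i) hX).add ?_)
  refine ContDiff.sum fun j _ => ContDiff.sum fun k _ => ?_
  exact ((hΓ i j k).mul (hX j)).mul (hY k)

lemma smooth_bracket {X Y : VF ι} (hX : SmoothVF X) (hY : SmoothVF Y) :
    SmoothVF (bracket X Y) := by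
  intro i
  simp only [bracket]
  exact (smooth_fderiv_apply (hY i) hX).sub (smooth_fderiv_apply (hX i) hY)

lemma smooth_curv {Γ : Chr ι} (hΓ : SmoothChr Γ) {X Y Z : VF ι} (hX : SmoothVF X)
    (hY : SmoothVF Y) (hZ : SmoothVF Z) : SmoothVF (curv Γ X Y Z) := by
  unfold curv
  exact smoothVF_sub
    (smoothVF_sub (smooth_conn hΓ hX (smooth_conn hΓ hY hZ))
      (smooth_conn hΓ hY (smooth_conn hΓ hX hZ)))
    (smooth_conn hΓ (smooth_bracket hX hY) hZ)

end SmoothLemmas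

section Splitting

variable {ι₁ ι₂ : Type} [Fintype ι₁] [DecidableEq ι₁] [Fintype ι₂] [DecidableEq ι₂]

/-- Projection onto the first factor, as a continuous linear map. -/
def P1 : (Pt (ι₁ ⊕ ι₂)) →L[ℝ] Pt ι₁ :=
  ContinuousLinearMap.pi fun a => ContinuousLinearMap.proj (Sum.inl a)

/-- Projection onto the second factor, as a continuous linear map. -/
def P2 : (Pt (ι₁ ⊕ ι₂)) →L[ℝ] Pt ι₂ :=
  ContinuousLinearMap.pi fun a => ContinuousLinearMap.proj (Sum.inr a)

@[simp] lemma P1_apply (q : Pt (ι₁ ⊕ ι₂)) (a : ι₁) : P1 q a = q (Sum.inl a) := rfl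
@[simp] lemma P2_apply (q : Pt (ι₁ ⊕ ι₂)) (a : ι₂) : P2 q a = q (Sum.inr a) := rfl

@[simp] lemma P1_eq (q : Pt (ι₁ ⊕ ι₂)) : (fun a => q (Sum.inl a)) = P1 q := rfl
@[simp] lemma P2_eq (q : Pt (ι₁ ⊕ ι₂)) : (fun a => q (Sum.inr a)) = P2 q := rfl

/-- A vector field on the product splits into a pair of vector fields on the factors. -/
def Splits (X : VF (ι₁ ⊕ ι₂)) (X₁ : VF ι₁) (X₂ : VF ι₂) : Prop :=
  (∀ q i, X q (Sum.inl i) = X₁ (P1 q) i) ∧ (∀ q i, X q (Sum.inr i) = X₂ (P2 q) i)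

lemma fderiv_comp_P1 (Y₁ : VF ι₁) (hY₁ : SmoothVF Y₁) (i : ι₁) (q w : Pt (ι₁ ⊕ ι₂)) :
    fderiv ℝ (fun q' => Y₁ (P1 q') i) q w = fderiv ℝ (fun p => Y₁ p i) (P1 q) (P1 w) := by
  have h : (fun q' => Y₁ (P1 q') i) = (fun p => Y₁ p i) ∘ (P1 (ι₁ := ι₁) (ι₂ := ι₂)) := rfl
  rw [h, fderiv_comp q (((hY₁ i).differentiable (by simp)).differentiableAt)
    (P1.differentiableAt)]
  simp [ContinuousLinearMap.fderiv]

lemma fderiv_comp_P2 (Y₂ : VF ι₂) (hY₂ : SmoothVF Y₂) (i : ι₂) (q w : Pt (ι₁ ⊕ ι₂)) :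
    fderiv ℝ (fun q' => Y₂ (P2 q') i) q w = fderiv ℝ (fun p => Y₂ p i) (P2 q) (P2 w) := by
  have h : (fun q' => Y₂ (P2 q') i) = (fun p => Y₂ p i) ∘ (P2 (ι₁ := ι₁) (ι₂ := ι₂)) := rfl
  rw [h, fderiv_comp q (((hY₂ i).differentiable (by simp)).differentiableAt)
    (P2.differentiableAt)]
  simp [ContinuousLinearMap.fderiv]

lemma splits_cvf (v : Pt (ι₁ ⊕ ι₂)) :
    Splits (cvf v) (cvf fun a => v (Sum.inl a)) (cvf fun a => v (Sum.inr a)) :=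
  ⟨fun _ _ => rfl, fun _ _ => rfl⟩

lemma splits_single_inl (b : ι₁) :
    Splits (cvf (Pi.single (Sum.inl b : ι₁ ⊕ ι₂) (1 : ℝ))) (cvf (Pi.single b 1)) (cvf 0) := by
  constructor
  · intro q i; simp [cvf, Pi.single_apply]
  · intro q i; simp [cvf, Pi.single_apply]

lemma splits_single_inr (b : ι₂) :
    Splits (cvf (Pi.single (Sum.inr b : ι₁ ⊕ ι₂) (1 : ℝ))) (cvf 0) (cvf (Pi.single b 1)) := by
  constructor
  · intro q i; simp [cvf, Pi.single_apply]
  · intro q i; simp [cvf, Pi.single_apply]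

lemma splits_sub {X Y : VF (ι₁ ⊕ ι₂)} {X₁ Y₁ : VF ι₁} {X₂ Y₂ : VF ι₂}
    (hX : Splits X X₁ X₂) (hY : Splits Y Y₁ Y₂) : Splits (X - Y) (X₁ - Y₁) (X₂ - Y₂) := by
  constructor
  · intro q i; simp [hX.1, hY.1]
  · intro q i; simp [hX.2, hY.2]

lemma splits_conn (Γ₁ : Chr ι₁) (Γ₂ : Chr ι₂) {X Y : VF (ι₁ ⊕ ι₂)} {X₁ Y₁ : VF ι₁}
    {X₂ Y₂ : VF ι₂} (hY₁ : SmoothVF Y₁) (hY₂ : SmoothVF Y₂)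
    (hX : Splits X X₁ X₂) (hY : Splits Y Y₁ Y₂) :
    Splits (conn (prodChr Γ₁ Γ₂) X Y) (conn Γ₁ X₁ Y₁) (conn Γ₂ X₂ Y₂) := by
  constructor
  · intro q i
    simp only [conn]
    have hfun : (fun q' => Y q' (Sum.inl i)) = fun q' => Y₁ (P1 q') i :=
      funext fun q' => hY.1 q' i
    have hXq : P1 (X q) = X₁ (P1 q) := funext fun a => by rw [P1_apply, hX.1]
    have hs : (∑ j, ∑ k, prodChr Γ₁ Γ₂ q (Sum.inl i) j k * X q j * Y q k)
        = ∑ j, ∑ k, Γ₁ (P1 q) i j k * X₁ (P1 q) j * Y₁ (P1 q) k := by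
      simp [Fintype.sum_sum_type, prodChr, hX.1, hY.1]
    rw [hfun, fderiv_comp_P1 Y₁ hY₁ i q (X q), hXq, hs]
  · intro q i
    simp only [conn]
    have hfun : (fun q' => Y q' (Sum.inr i)) = fun q' => Y₂ (P2 q') i :=
      funext fun q' => hY.2 q' i
    have hXq : P2 (X q) = X₂ (P2 q) := funext fun a => by rw [P2_apply, hX.2]
    have hs : (∑ j, ∑ k, prodChr Γ₁ Γ₂ q (Sum.inr i) j k * X q j * Y q k)
        = ∑ j, ∑ k, Γ₂ (P2 q) i j k * X₂ (P2 q) j * Y₂ (P2 q) k := by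
      simp [Fintype.sum_sum_type, prodChr, hX.2, hY.2]
    rw [hfun, fderiv_comp_P2 Y₂ hY₂ i q (X q), hXq, hs]

lemma splits_bracket {X Y : VF (ι₁ ⊕ ι₂)} {X₁ Y₁ : VF ι₁} {X₂ Y₂ : VF ι₂}
    (hX₁ : SmoothVF X₁) (hX₂ : SmoothVF X₂) (hY₁ : SmoothVF Y₁) (hY₂ : SmoothVF Y₂)
    (hX : Splits X X₁ X₂) (hY : Splits Y Y₁ Y₂) :
    Splits (bracket X Y) (bracket X₁ Y₁) (bracket X₂ Y₂) := by
  constructor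
  · intro q i
    simp only [bracket]
    have hfunY : (fun q' => Y q' (Sum.inl i)) = fun q' => Y₁ (P1 q') i :=
      funext fun q' => hY.1 q' i
    have hfunX : (fun q' => X q' (Sum.inl i)) = fun q' => X₁ (P1 q') i :=
      funext fun q' => hX.1 q' i
    have hXq : P1 (X q) = X₁ (P1 q) := funext fun a => by rw [P1_apply, hX.1]
    have hYq : P1 (Y q) = Y₁ (P1 q) := funext fun a => by rw [P1_apply, hY.1]
    rw [hfunY, hfunX, fderiv_comp_P1 Y₁ hY₁ i q (X q), fderiv_comp_P1 X₁ hX₁ i q (Y q),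
      hXq, hYq]
  · intro q i
    simp only [bracket]
    have hfunY : (fun q' => Y q' (Sum.inr i)) = fun q' => Y₂ (P2 q') i :=
      funext fun q' => hY.2 q' i
    have hfunX : (fun q' => X q' (Sum.inr i)) = fun q' => X₂ (P2 q') i :=
      funext fun q' => hX.2 q' i
    have hXq : P2 (X q) = X₂ (P2 q) := funext fun a => by rw [P2_apply, hX.2]
    have hYq : P2 (Y q) = Y₂ (P2 q) := funext fun a => by rw [P2_apply, hY.2]
    rw [hfunY, hfunX, fderiv_comp_P2 Y₂ hY₂ i q (X q), fderiv_comp_P2 X₂ hX₂ i q (Y q),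
      hXq, hYq]

lemma splits_curv {Γ₁ : Chr ι₁} {Γ₂ : Chr ι₂} (hΓ₁ : SmoothChr Γ₁) (hΓ₂ : SmoothChr Γ₂)
    {X Y Z : VF (ι₁ ⊕ ι₂)} {X₁ Y₁ Z₁ : VF ι₁} {X₂ Y₂ Z₂ : VF ι₂}
    (hX₁ : SmoothVF X₁) (hX₂ : SmoothVF X₂) (hY₁ : SmoothVF Y₁) (hY₂ : SmoothVF Y₂)
    (hZ₁ : SmoothVF Z₁) (hZ₂ : SmoothVF Z₂)
    (hX : Splits X X₁ X₂) (hY : Splits Y Y₁ Y₂) (hZ : Splits Z Z₁ Z₂) :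
    Splits (curv (prodChr Γ₁ Γ₂) X Y Z) (curv Γ₁ X₁ Y₁ Z₁) (curv Γ₂ X₂ Y₂ Z₂) := by
  unfold curv
  exact splits_sub
    (splits_sub
      (splits_conn Γ₁ Γ₂ (smooth_conn hΓ₁ hY₁ hZ₁) (smooth_conn hΓ₂ hY₂ hZ₂) hX
        (splits_conn Γ₁ Γ₂ hZ₁ hZ₂ hY hZ))
      (splits_conn Γ₁ Γ₂ (smooth_conn hΓ₁ hX₁ hZ₁) (smooth_conn hΓ₂ hX₂ hZ₂) hY
        (splits_conn Γ₁ Γ₂ hZ₁ hZ₂ hX hZ)))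
    (splits_conn Γ₁ Γ₂ hZ₁ hZ₂ (splits_bracket hX₁ hX₂ hY₁ hY₂ hX hY) hZ)

lemma splits_covCurv {Γ₁ : Chr ι₁} {Γ₂ : Chr ι₂} (hΓ₁ : SmoothChr Γ₁) (hΓ₂ : SmoothChr Γ₂)
    {X Y Z W : VF (ι₁ ⊕ ι₂)} {X₁ Y₁ Z₁ W₁ : VF ι₁} {X₂ Y₂ Z₂ W₂ : VF ι₂}
    (hX₁ : SmoothVF X₁) (hX₂ : SmoothVF X₂) (hY₁ : SmoothVF Y₁) (hY₂ : SmoothVF Y₂)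
    (hZ₁ : SmoothVF Z₁) (hZ₂ : SmoothVF Z₂) (hW₁ : SmoothVF W₁) (hW₂ : SmoothVF W₂)
    (hX : Splits X X₁ X₂) (hY : Splits Y Y₁ Y₂) (hZ : Splits Z Z₁ Z₂) (hW : Splits W W₁ W₂) :
    Splits (covCurv (prodChr Γ₁ Γ₂) X Y Z W) (covCurv Γ₁ X₁ Y₁ Z₁ W₁)
      (covCurv Γ₂ X₂ Y₂ Z₂ W₂) := by
  unfold covCurv
  exact splits_sub
    (splits_sub
      (splits_sub
        (splits_conn Γ₁ Γ₂ (smooth_curv hΓ₁ hY₁ hZ₁ hW₁) (smooth_curv hΓ₂ hY₂ hZ₂ hW₂) hX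
          (splits_curv hΓ₁ hΓ₂ hY₁ hY₂ hZ₁ hZ₂ hW₁ hW₂ hY hZ hW))
        (splits_curv hΓ₁ hΓ₂ (smooth_conn hΓ₁ hX₁ hY₁) (smooth_conn hΓ₂ hX₂ hY₂) hZ₁ hZ₂
          hW₁ hW₂ (splits_conn Γ₁ Γ₂ hY₁ hY₂ hX hY) hZ hW))
      (splits_curv hΓ₁ hΓ₂ hY₁ hY₂ (smooth_conn hΓ₁ hX₁ hZ₁) (smooth_conn hΓ₂ hX₂ hZ₂)
        hW₁ hW₂ hY (splits_conn Γ₁ Γ₂ hZ₁ hZ₂ hX hZ) hW))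
    (splits_curv hΓ₁ hΓ₂ hY₁ hY₂ hZ₁ hZ₂ (smooth_conn hΓ₁ hX₁ hW₁) (smooth_conn hΓ₂ hX₂ hW₂)
      hY hZ (splits_conn Γ₁ Γ₂ hW₁ hW₂ hX hW))

lemma splits_szabo {Γ₁ : Chr ι₁} {Γ₂ : Chr ι₂} (hΓ₁ : SmoothChr Γ₁) (hΓ₂ : SmoothChr Γ₂)
    {X Y : VF (ι₁ ⊕ ι₂)} {X₁ Y₁ : VF ι₁} {X₂ Y₂ : VF ι₂}
    (hX₁ : SmoothVF X₁) (hX₂ : SmoothVF X₂) (hY₁ : SmoothVF Y₁) (hY₂ : SmoothVF Y₂)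
    (hX : Splits X X₁ X₂) (hY : Splits Y Y₁ Y₂) :
    Splits (szabo (prodChr Γ₁ Γ₂) X Y) (szabo Γ₁ X₁ Y₁) (szabo Γ₂ X₂ Y₂) := by
  unfold szabo
  exact splits_covCurv hΓ₁ hΓ₂ hX₁ hX₂ hY₁ hY₂ hX₁ hX₂ hX₁ hX₂ hX hY hX hX

lemma fromBlocks_diag_pow (A : Matrix ι₁ ι₁ ℝ) (B : Matrix ι₂ ι₂ ℝ) (n : ℕ) :
    (Matrix.fromBlocks A 0 0 B) ^ n = Matrix.fromBlocks (A ^ n) 0 0 (B ^ n) := by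
  induction n with
  | zero => simp [Matrix.fromBlocks_one]
  | succ n ih => rw [pow_succ, ih, Matrix.fromBlocks_multiply]; simp [pow_succ]

end Splitting

/-- If `(M₁,∇₁)` is affine Szabó at `p₁` and `(M₂,∇₂)` is affine Szabó at `p₂`, then the
product manifold with the product connection is affine Szabó at `(p₁,p₂)`. -/
theorem prod_affineSzabo {ι₁ ι₂ : Type} [Fintype ι₁] [DecidableEq ι₁] [Fintype ι₂]
    [DecidableEq ι₂] (Γ₁ : Chr ι₁) (Γ₂ : Chr ι₂) (hΓ₁ : SmoothChr Γ₁) (hΓ₂ : SmoothChr Γ₂)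
    (p₁ : Pt ι₁) (p₂ : Pt ι₂)
    (h₁ : ∀ v : Pt ι₁, IsNilpotent (szaboMat Γ₁ p₁ v))
    (h₂ : ∀ v : Pt ι₂, IsNilpotent (szaboMat Γ₂ p₂ v)) :
    ∀ v : Pt (ι₁ ⊕ ι₂), IsNilpotent (szaboMat (prodChr Γ₁ Γ₂) (Sum.elim p₁ p₂) v) := by
  intro v
  set v₁ : Pt ι₁ := fun a => v (Sum.inl a) with hv₁
  set v₂ : Pt ι₂ := fun a => v (Sum.inr a) with hv₂
  have hP1 : P1 (Sum.elim p₁ p₂ : Pt (ι₁ ⊕ ι₂)) = p₁ := funext fun a => rfl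
  have hP2 : P2 (Sum.elim p₁ p₂ : Pt (ι₁ ⊕ ι₂)) = p₂ := funext fun a => rfl
  have key : szaboMat (prodChr Γ₁ Γ₂) (Sum.elim p₁ p₂) v =
      Matrix.fromBlocks (szaboMat Γ₁ p₁ v₁) 0 0 (szaboMat Γ₂ p₂ v₂) := by
    ext i m
    rcases i with a | a <;> rcases m with b | b
    · have hsp := splits_szabo hΓ₁ hΓ₂ (smoothVF_cvf v₁) (smoothVF_cvf v₂)
        (smoothVF_cvf (Pi.single b 1)) (smoothVF_cvf 0) (splits_cvf v) (splits_single_inl b)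
      have := hsp.1 (Sum.elim p₁ p₂) a
      rw [hP1] at this
      simpa [szaboMat, Matrix.fromBlocks] using this
    · have hsp := splits_szabo hΓ₁ hΓ₂ (smoothVF_cvf v₁) (smoothVF_cvf v₂)
        (smoothVF_cvf 0) (smoothVF_cvf (Pi.single b 1)) (splits_cvf v) (splits_single_inr b)
      have := hsp.1 (Sum.elim p₁ p₂) a
      rw [hP1, szabo_cvf_zero] at this
      simpa [szaboMat, Matrix.fromBlocks, cvf] using this
    · have hsp := splits_szabo hΓ₁ hΓ₂ (smoothVF_cvf v₁) (smoothVF_cvf v₂)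
        (smoothVF_cvf (Pi.single b 1)) (smoothVF_cvf 0) (splits_cvf v) (splits_single_inl b)
      have := hsp.2 (Sum.elim p₁ p₂) a
      rw [hP2, szabo_cvf_zero] at this
      simpa [szaboMat, Matrix.fromBlocks, cvf] using this
    · have hsp := splits_szabo hΓ₁ hΓ₂ (smoothVF_cvf v₁) (smoothVF_cvf v₂)
        (smoothVF_cvf 0) (smoothVF_cvf (Pi.single b 1)) (splits_cvf v) (splits_single_inr b)
      have := hsp.2 (Sum.elim p₁ p₂) a
      rw [hP2] at this
      simpa [szaboMat, Matrix.fromBlocks] using this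
  obtain ⟨n₁, hn₁⟩ := h₁ v₁
  obtain ⟨n₂, hn₂⟩ := h₂ v₂
  refine ⟨n₁ + n₂, ?_⟩
  have hA : (szaboMat Γ₁ p₁ v₁) ^ (n₁ + n₂) = 0 := by rw [pow_add, hn₁, zero_mul]
  have hB : (szaboMat Γ₂ p₂ v₂) ^ (n₁ + n₂) = 0 := by rw [pow_add, hn₂, mul_zero]
  rw [key, fromBlocks_diag_pow, hA, hB]
  ext i j
  rcases i with a | a <;> rcases j with b | b <;> simp

end AffineSzabo
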